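/- arXiv:2309.04020 — 2 statements merged into one kernel-verified Lean document; each statement's English description precedes it below -/
import Mathlib

section
/- Fix any constraint C and any bijection σ : {1,…,n} → N. Define α by α(μ) = ∅ for feasible μ, and α(μ) = {σ(r)} for infeasible μ, where r is the smallest index such that the restriction of μ to {σ(1),…,σ(r)} has no feasible complete extension. Then α is an implementable local compromiser assignment for C and LP_α equals the serial dictatorship for σ; in particular, for every constraint the serial dictatorship is a local priority mechanism. -/
/- Common framework: constrained allocation, local priority mechanisms
   (Root & Ahn, "Local Priority Mechanisms"). Agents `N`, objects `O`.
   A strict preference is encoded as a `LinearOrder` on `O`, where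
   `pi.lt b a` means `a` is strictly preferred to `b`. -/

open Classical

noncomputable section

variable {N O : Type}

/-- `a` is strictly preferred to `b` under `pi`. -/
def sPref (pi : LinearOrder O) (a b : O) : Prop := pi.lt b a

/-- `a` is weakly preferred to `b` under `pi`. -/
def wPref (pi : LinearOrder O) (a b : O) : Prop := a = b ∨ pi.lt b a

/-- The favourite (top-ranked) object under `pi`. -/
def topObj [Fintype O] [Nonempty O] (pi : LinearOrder O) : O :=
  @Finset.max' O pi Finset.univ Finset.univ_nonempty

/-- `tau1 p` is the allocation assigning each agent her favourite object. -/
def tau1 [Fintype O] [Nonempty O] (p : N → LinearOrder O) : N → O :=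
  fun i => topObj (p i)

/-- The strict lower contour set of `a` under `pi`, as a finset. -/
def LCfin [Fintype O] (pi : LinearOrder O) (a : O) : Finset O :=
  Finset.univ.filter fun b => pi.lt b a

/-- The best element of the strict lower contour set of `a` (junk value `a` if empty). -/
def bestLC [Fintype O] (pi : LinearOrder O) (a : O) : O :=
  if h : (LCfin pi a).Nonempty then @Finset.max' O pi _ h else a

/-- At `x`, no local compromiser has an empty strict lower contour set. -/
def lpNoFail [Fintype O] (α : (N → O) → Set N) (p : N → LinearOrder O) (x : N → O) : Prop :=
  ∀ i ∈ α x, (LCfin (p i) (x i)).Nonempty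

/-- One step of the local priority algorithm: all local compromisers move to their
next-favourite object, everyone else stays put. -/
def lpStep [Fintype O] (α : (N → O) → Set N) (p : N → LinearOrder O) (x : N → O) : N → O :=
  fun k => if k ∈ α x then bestLC (p k) (x k) else x k

/-- The local priority algorithm for `α` at profile `p` terminates (without failure)
returning the feasible allocation `y`. -/
def lpRunsTo [Fintype O] [Nonempty O] (C : Set (N → O)) (α : (N → O) → Set N)
    (p : N → LinearOrder O) (y : N → O) : Prop :=
  ∃ (m : ℕ) (x : ℕ → N → O),
    x 0 = tau1 p ∧
    (∀ t < m, x t ∉ C ∧ lpNoFail α p (x t) ∧ x (t + 1) = lpStep α p (x t)) ∧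
    x m = y ∧ y ∈ C

/-- `α` is a local compromiser assignment for the constraint `C`. -/
def IsLCA (C : Set (N → O)) (α : (N → O) → Set N) : Prop :=
  ∀ x, (x ∉ C → (α x).Nonempty) ∧ (x ∈ C → α x = ∅)

/-- `α` is implementable: the local priority algorithm returns a feasible
allocation (never the failure symbol) on every profile. -/
def lpImplementable [Fintype O] [Nonempty O] (C : Set (N → O)) (α : (N → O) → Set N) : Prop :=
  ∀ p : N → LinearOrder O, ∃ y, lpRunsTo C α p y

/-- `α` is an implementable local compromiser assignment for `C` inducing the mechanism `f`,
i.e. `f = LP_α`. -/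
def lpInduces [Fintype O] [Nonempty O] (C : Set (N → O)) (α : (N → O) → Set N)
    (f : (N → LinearOrder O) → N → O) : Prop :=
  IsLCA C α ∧ ∀ p, lpRunsTo C α p (f p)

/-- The local priority mechanism `LP_α` (well defined whenever `α` is implementable,
since the algorithm is deterministic). -/
def LPmech [Fintype O] [Nonempty O] (C : Set (N → O)) (α : (N → O) → Set N)
    (p : N → LinearOrder O) : N → O :=
  if h : ∃ y, lpRunsTo C α p y then h.choose else fun _ => Classical.arbitrary O

/-- Group strategy-proofness. -/
def GSP (f : (N → LinearOrder O) → N → O) : Prop :=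
  ∀ (p p' : N → LinearOrder O) (M : Set N), M.Nonempty → (∀ j ∉ M, p' j = p j) →
    ¬ ((∀ j ∈ M, wPref (p j) (f p' j) (f p j)) ∧ ∃ k ∈ M, sPref (p k) (f p' k) (f p k))

/-- (Individual) strategy-proofness. -/
def StratProof (f : (N → LinearOrder O) → N → O) : Prop :=
  ∀ (p p' : N → LinearOrder O) (i : N), (∀ j, j ≠ i → p' j = p j) →
    ¬ sPref (p i) (f p' i) (f p i)

/-- Nonbossiness. -/
def Nonbossy (f : (N → LinearOrder O) → N → O) : Prop :=
  ∀ (p p' : N → LinearOrder O) (i : N), (∀ j, j ≠ i → p' j = p j) →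
    f p' i = f p i → f p' = f p

/-- Maskin monotonicity. -/
def MaskinMono (f : (N → LinearOrder O) → N → O) : Prop :=
  ∀ p p' : N → LinearOrder O,
    (∀ (i : N) (b : O), (p i).lt b (f p i) → (p' i).lt b (f p i)) → f p' = f p

/-- Unanimity. -/
def Unanimity [Fintype O] [Nonempty O] (C : Set (N → O))
    (f : (N → LinearOrder O) → N → O) : Prop :=
  ∀ p, tau1 p ∈ C → f p = tau1 p

/-- The Fixed compromiser condition. -/
def FixedComp [Fintype O] [Nonempty O] (C : Set (N → O))
    (f : (N → LinearOrder O) → N → O) : Prop :=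
  ∀ μ, μ ∉ C → ∃ i : N, ∀ p, tau1 p = μ → f p i ≠ μ i

/-- `pi'` is obtained from `pi` by moving `c` to the bottom of the ranking. -/
def MoveBottom (pi pi' : LinearOrder O) (c : O) : Prop :=
  (∀ b, b ≠ c → pi'.lt c b) ∧ (∀ a b, a ≠ c → b ≠ c → (pi'.lt a b ↔ pi.lt a b))

/-- Compromiser invariance. -/
def CompInv [Fintype O] [Nonempty O] (C : Set (N → O))
    (f : (N → LinearOrder O) → N → O) : Prop :=
  ∀ μ, μ ∉ C → ∀ p p' : N → LinearOrder O, tau1 p = μ →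
    (∀ i, (∀ q, tau1 q = μ → f q i ≠ μ i) → MoveBottom (p i) (p' i) (μ i)) →
    (∀ i, ¬ (∀ q, tau1 q = μ → f q i ≠ μ i) → p' i = p i) →
    f p' = f p

/-- Pareto efficiency relative to the constraint `C`. -/
def ParetoEff (C : Set (N → O)) (f : (N → LinearOrder O) → N → O) : Prop :=
  ∀ p, ¬ ∃ ν ∈ C, (∀ i, wPref (p i) (ν i) (f p i)) ∧ ∃ k, sPref (p k) (ν k) (f p k)

/-- `diffSet x y = d(x,y)`, the set of agents on which `x` and `y` differ. -/
def diffSet (x y : N → O) : Set N := {i | x i ≠ y i}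

/-- Forward consistency. -/
def ForwardCons (α : (N → O) → Set N) : Prop :=
  ∀ x y : N → O, diffSet x y ⊆ α x → α x \ diffSet x y ⊆ α y

/-- The sequence of allocations `z 0, …, z m` is acyclic. -/
def AcyclicSeq (z : ℕ → N → O) (m : ℕ) : Prop :=
  ∀ (i : N) (r s t : ℕ), r < s → s < t → t ≤ m → z r i = z t i → z s i = z r i

/-- `x` and `y` are `i`-connected under `α`. -/
def IConn (α : (N → O) → Set N) (i : N) (x y : N → O) : Prop :=
  ∃ m : ℕ, 1 ≤ m ∧ ∃ z : ℕ → N → O,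
    z 0 = x ∧ z m = y ∧ AcyclicSeq z m ∧ diffSet (z 0) (z 1) = {i} ∧
    ∀ l < m, diffSet (z l) (z (l + 1)) ⊆ α (z l)

/-- Backward consistency. -/
def BackCons (C : Set (N → O)) (α : (N → O) → Set N) : Prop :=
  ∀ (i : N) (x y : N → O), x ∉ C → y ∉ C → IConn α i x y →
    ∀ x' : N → O, diffSet x x' ⊆ α y → i ∉ diffSet x x' → i ∈ α x'

/-- The pointwise union of all implementable local compromiser assignments inducing `f`. -/
def alphaUnionAll [Fintype O] [Nonempty O] (C : Set (N → O))
    (f : (N → LinearOrder O) → N → O) : (N → O) → Set N :=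
  fun x => {i | ∃ β, lpInduces C β f ∧ i ∈ β x}

end

/-! Along the run of the local priority algorithm every agent weakly prefers her current object
to the one she gets under the serial dictatorship `g`. Under this invariant, an allocation whose
restriction to `σ 0, …, σ r` extends feasibly agrees with `g` there, by induction on `r` and the
optimality of each dictator's pick. Hence a feasible allocation is `g` itself, and at an
infeasible one the compromiser `σ r` holds an object strictly above `g (σ r)`: moving her one step
down keeps the invariant and strictly shrinks the lower contour sets, so the algorithm runs to `g`. -/

section LowerContour

variable {O : Type} [Fintype O]

@[simp]
lemma mem_LCfin {pi : LinearOrder O} {a b : O} : b ∈ LCfin pi a ↔ pi.lt b a := by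
  simp [LCfin]

lemma wPref_topObj [Nonempty O] (pi : LinearOrder O) (b : O) : wPref pi (topObj pi) b := by
  let := pi
  exact (Finset.le_max' Finset.univ b (Finset.mem_univ b)).eq_or_lt.imp Eq.symm id

lemma bestLC_lt {pi : LinearOrder O} {a : O} (h : (LCfin pi a).Nonempty) :
    pi.lt (bestLC pi a) a := by
  let := pi
  rw [bestLC, dif_pos h, ← mem_LCfin]
  exact Finset.max'_mem _ h

lemma wPref_bestLC {pi : LinearOrder O} {a b : O} (h : pi.lt b a) : wPref pi (bestLC pi a) b := by
  let := pi
  have hb : b ∈ LCfin pi a := mem_LCfin.2 h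
  rw [bestLC, dif_pos ⟨b, hb⟩]
  exact (Finset.le_max' _ b hb).eq_or_lt.imp Eq.symm id

lemma card_LCfin_lt_of_lt {pi : LinearOrder O} {a c : O} (h : pi.lt c a) :
    (LCfin pi c).card < (LCfin pi a).card := by
  let := pi
  refine Finset.card_lt_card ⟨fun b hb => ?_, fun hsub => ?_⟩
  · exact mem_LCfin.2 (lt_trans (mem_LCfin.1 hb) h)
  · exact lt_irrefl c (mem_LCfin.1 (hsub (mem_LCfin.2 h)))

end LowerContour

section Algorithm

variable {N O : Type} [Fintype O] {C : Set (N → O)} {α : (N → O) → Set N}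
  {p : N → LinearOrder O}

def lowerContourCount [Fintype N] (p : N → LinearOrder O) (x : N → O) : ℕ :=
  ∑ i, (LCfin (p i) (x i)).card

lemma lowerContourCount_update_lt [Fintype N] {x : N → O} {i : N} {c : O}
    (h : (p i).lt c (x i)) : lowerContourCount p (Function.update x i c) < lowerContourCount p x := by
  refine Finset.sum_lt_sum (fun j _ => ?_) ⟨i, Finset.mem_univ _, ?_⟩
  · rcases eq_or_ne j i with rfl | hj
    · simpa using (card_LCfin_lt_of_lt h).le
    · rw [Function.update_of_ne hj]
  · simpa using card_LCfin_lt_of_lt h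

lemma lpStep_eq_update {x : N → O} {i : N} (hα : α x = {i}) :
    lpStep α p x = Function.update x i (bestLC (p i) (x i)) := by
  funext k
  rcases eq_or_ne k i with rfl | hk
  · simp [lpStep, hα]
  · simp [lpStep, hα, hk]

variable [Nonempty O]

noncomputable def lpRun (C : Set (N → O)) (α : (N → O) → Set N) (p : N → LinearOrder O) :
    ℕ → N → O
  | 0 => tau1 p
  | t + 1 => if lpRun C α p t ∈ C then lpRun C α p t else lpStep α p (lpRun C α p t)

lemma lpRun_succ_of_not_mem {t : ℕ} (h : lpRun C α p t ∉ C) :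
    lpRun C α p (t + 1) = lpStep α p (lpRun C α p t) := by
  rw [lpRun, if_neg h]

lemma lpRunsTo_of_invariant (I : (N → O) → Prop) (Φ : (N → O) → ℕ) {g : N → O}
    (h0 : I (tau1 p))
    (hstep : ∀ x ∉ C, I x → lpNoFail α p x ∧ I (lpStep α p x) ∧ Φ (lpStep α p x) < Φ x)
    (hfeas : ∀ y ∈ C, I y → y = g) :
    lpRunsTo C α p g := by
  have hinv : ∀ t, I (lpRun C α p t) := by
    intro t
    induction t with
    | zero => exact h0
    | succ t ih =>
      by_cases ht : lpRun C α p t ∈ C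
      · rwa [lpRun, if_pos ht]
      · rw [lpRun_succ_of_not_mem ht]
        exact (hstep _ ht ih).2.1
  have hterm : ∃ t, lpRun C α p t ∈ C := by
    by_contra! hout
    have hdecr : ∀ t, Φ (lpRun C α p t) + t ≤ Φ (lpRun C α p 0) := by
      intro t
      induction t with
      | zero => simp
      | succ t ih =>
        have := (hstep _ (hout t) (hinv t)).2.2
        rw [← lpRun_succ_of_not_mem (hout t)] at this
        omega
    have := hdecr (Φ (lpRun C α p 0) + 1)
    omega
  have hstop := Nat.find_spec hterm
  refine ⟨Nat.find hterm, lpRun C α p, rfl, fun t ht => ?_, hfeas _ hstop (hinv _), ?_⟩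
  · have hnot : lpRun C α p t ∉ C := Nat.find_min hterm ht
    exact ⟨hnot, (hstep _ hnot (hinv t)).1, lpRun_succ_of_not_mem hnot⟩
  · rwa [← hfeas _ hstop (hinv _)]

end Algorithm

section SerialDictatorship

variable {N O : Type} {C : Set (N → O)} {n : ℕ} {σ : Fin n ≃ N}

def HasFeasibleExtension (C : Set (N → O)) (σ : Fin n ≃ N) (μ : N → O) (r : Fin n) : Prop :=
  ∃ z ∈ C, ∀ l ≤ r, z (σ l) = μ (σ l)

/-- The sequential definition of the serial dictatorship, recast as the optimality of each
dictator's object given those of the earlier dictators. -/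
def IsSerialDictatorshipOutcome (C : Set (N → O)) (σ : Fin n ≃ N) (p : N → LinearOrder O)
    (g : N → O) : Prop :=
  ∀ r : Fin n, ∀ z ∈ C, (∀ l < r, z (σ l) = g (σ l)) → ¬ sPref (p (σ r)) (z (σ r)) (g (σ r))

lemma HasFeasibleExtension.mono {μ : N → O} {l r : Fin n}
    (h : HasFeasibleExtension C σ μ r) (hl : l ≤ r) : HasFeasibleExtension C σ μ l := by
  obtain ⟨z, hz, hzr⟩ := h
  exact ⟨z, hz, fun l' hl' => hzr l' (hl'.trans hl)⟩

lemma mem_of_forall_hasFeasibleExtension {μ : N → O} (hC : C.Nonempty)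
    (h : ∀ r, HasFeasibleExtension C σ μ r) : μ ∈ C := by
  cases n with
  | zero =>
    obtain ⟨z, hz⟩ := hC
    exact (funext fun i => (σ.symm i).elim0 : z = μ) ▸ hz
  | succ k =>
    obtain ⟨z, hz, hzμ⟩ := h (Fin.last k)
    have hzeq : z = μ := funext fun i => by
      simpa using hzμ (σ.symm i) (Fin.le_last _)
    exact hzeq ▸ hz

lemma exists_first_not_hasFeasibleExtension {μ : N → O} (hC : C.Nonempty) (hμ : μ ∉ C) :
    ∃ r, (∀ l < r, HasFeasibleExtension C σ μ l) ∧ ¬ HasFeasibleExtension C σ μ r := by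
  have hne : {r | ¬ HasFeasibleExtension C σ μ r}.Nonempty := by
    by_contra! hall
    exact hμ (mem_of_forall_hasFeasibleExtension hC fun r => by
      simpa using Set.eq_empty_iff_forall_notMem.1 hall r)
  obtain ⟨r, hr, hmin⟩ := wellFounded_lt.has_min _ hne
  exact ⟨r, fun l hl => by_contra fun h => hmin l h hl, hr⟩

namespace IsSerialDictatorshipOutcome

variable {p : N → LinearOrder O} {g x : N → O}

lemma apply_eq_of_hasFeasibleExtension (hg : IsSerialDictatorshipOutcome C σ p g)
    (hx : ∀ i, wPref (p i) (x i) (g i)) {r : Fin n} (hr : HasFeasibleExtension C σ x r) :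
    x (σ r) = g (σ r) := by
  induction r using WellFoundedLT.induction with
  | _ r ih =>
    obtain ⟨z, hz, hzx⟩ := hr
    have hzg : ∀ l < r, z (σ l) = g (σ l) := fun l hl =>
      (hzx l hl.le).trans (ih l hl (HasFeasibleExtension.mono ⟨z, hz, hzx⟩ hl.le))
    have hnot := hg r z hz hzg
    rw [hzx r le_rfl] at hnot
    exact (hx (σ r)).resolve_right hnot

lemma eq_of_mem (hg : IsSerialDictatorshipOutcome C σ p g)
    (hx : ∀ i, wPref (p i) (x i) (g i)) (hxC : x ∈ C) : x = g :=
  funext fun i => by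
    simpa using hg.apply_eq_of_hasFeasibleExtension hx (r := σ.symm i) ⟨x, hxC, fun _ _ => rfl⟩

lemma lt_of_not_hasFeasibleExtension (hg : IsSerialDictatorshipOutcome C σ p g) (hgC : g ∈ C)
    (hx : ∀ i, wPref (p i) (x i) (g i)) {r : Fin n}
    (hpre : ∀ l < r, HasFeasibleExtension C σ x l) (hr : ¬ HasFeasibleExtension C σ x r) :
    (p (σ r)).lt (g (σ r)) (x (σ r)) := by
  refine (hx (σ r)).resolve_left fun heq => hr ⟨g, hgC, fun l hl => ?_⟩
  rcases hl.lt_or_eq with hl | rfl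
  · exact (hg.apply_eq_of_hasFeasibleExtension hx (hpre l hl)).symm
  · exact heq.symm

end IsSerialDictatorshipOutcome

end SerialDictatorship

theorem serialDictatorship_isLocalPriority_general
    {N O : Type} [Fintype O] [Nonempty O]
    (C : Set (N → O))
    (n : ℕ) (σ : Fin n ≃ N)
    (α : (N → O) → Set N)
    (hα0 : ∀ μ ∈ C, α μ = ∅)
    (hα1 : ∀ μ, μ ∉ C → ∀ r : Fin n,
      (∀ r' : Fin n, r' < r → ∃ z ∈ C, ∀ l : Fin n, l ≤ r' → z (σ l) = μ (σ l)) →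
      ¬ (∃ z ∈ C, ∀ l : Fin n, l ≤ r → z (σ l) = μ (σ l)) →
      α μ = {σ r})
    (f : (N → LinearOrder O) → N → O)
    (hfC : ∀ p, f p ∈ C)
    (hf : ∀ (p : N → LinearOrder O) (r : Fin n), ∀ z ∈ C,
      (∀ l : Fin n, l < r → z (σ l) = f p (σ l)) →
      ¬ sPref (p (σ r)) (z (σ r)) (f p (σ r))) :
    lpInduces C α f := by
  let : Fintype N := Fintype.ofEquiv (Fin n) σ
  have hC : C.Nonempty := ⟨f fun _ => IsWellOrder.linearOrder WellOrderingRel, hfC _⟩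
  have hα : ∀ μ ∉ C, ∃ r, (∀ l < r, HasFeasibleExtension C σ μ l) ∧
      ¬ HasFeasibleExtension C σ μ r ∧ α μ = {σ r} := fun μ hμ => by
    obtain ⟨r, hpre, hr⟩ := exists_first_not_hasFeasibleExtension (σ := σ) hC hμ
    exact ⟨r, hpre, hr, hα1 μ hμ r hpre hr⟩
  refine ⟨fun x => ⟨fun hx => ?_, hα0 x⟩, fun p => ?_⟩
  · obtain ⟨r, -, -, hr⟩ := hα x hx
    exact hr ▸ Set.singleton_nonempty _
  have hg : IsSerialDictatorshipOutcome C σ p (f p) := hf p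
  refine lpRunsTo_of_invariant (fun x => ∀ i, wPref (p i) (x i) (f p i)) (lowerContourCount p)
    (fun i => wPref_topObj _ _) (fun x hx hdom => ?_) (fun y hy hdom => hg.eq_of_mem hdom hy)
  obtain ⟨r, hpre, hr, hαx⟩ := hα x hx
  have hlt := hg.lt_of_not_hasFeasibleExtension (hfC p) hdom hpre hr
  have hLC : (LCfin (p (σ r)) (x (σ r))).Nonempty := ⟨_, mem_LCfin.2 hlt⟩
  rw [lpStep_eq_update hαx]
  refine ⟨fun i hi => ?_, fun i => ?_, lowerContourCount_update_lt (bestLC_lt hLC)⟩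
  · rw [hαx] at hi
    exact hi ▸ hLC
  · rcases eq_or_ne i (σ r) with rfl | hi
    · simpa using wPref_bestLC hlt
    · simpa [Function.update_of_ne hi] using hdom i

/-- serial dictatorship is a local priority mechanism, for every
constraint `C` and every ordering `σ` of the agents.  Here `α` assigns to each
infeasible `μ` the singleton `{σ r}` for the least `r` such that the restriction of
`μ` to `{σ 0, …, σ r}` has no feasible complete extension, and `f` is the serial
dictatorship for `σ`: each dictator `σ r` in turn receives her favourite object among
those she gets in some feasible complete extension of the earlier dictators' picks. -/
theorem serialDictatorship_isLocalPriority
    {N O : Type} [Fintype N] [Fintype O] [Nonempty O]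
    (C : Set (N → O)) (hC : C.Nonempty)
    (n : ℕ) (σ : Fin n ≃ N)
    (α : (N → O) → Set N)
    (hα0 : ∀ μ ∈ C, α μ = ∅)
    (hα1 : ∀ μ, μ ∉ C → ∀ r : Fin n,
      (∀ r' : Fin n, r' < r → ∃ z ∈ C, ∀ l : Fin n, l ≤ r' → z (σ l) = μ (σ l)) →
      ¬ (∃ z ∈ C, ∀ l : Fin n, l ≤ r → z (σ l) = μ (σ l)) →
      α μ = {σ r})
    (f : (N → LinearOrder O) → N → O)
    (hfC : ∀ p, f p ∈ C)
    (hf : ∀ (p : N → LinearOrder O) (r : Fin n), ∀ z ∈ C,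
      (∀ l : Fin n, l < r → z (σ l) = f p (σ l)) →
      ¬ sPref (p (σ r)) (z (σ r)) (f p (σ r))) :
    lpInduces C α f :=
  serialDictatorship_isLocalPriority_general C n σ α hα0 hα1 f hfC hf
end

section
/- Fix a constraint C. If a local priority mechanism for C is group strategy-proof, then it is Pareto efficient. -/
/- Common framework: constrained allocation, local priority mechanisms
   (Root & Ahn, "Local Priority Mechanisms"). Agents `N`, objects `O`.
   A strict preference is encoded as a `LinearOrder` on `O`, where
   `pi.lt b a` means `a` is strictly preferred to `b`. -/

open Classical

/-!
A local priority mechanism is unanimous: when every agent's favourite object already gives a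
feasible allocation, the algorithm stops at once. Given a feasible `ν` Pareto-dominating the
outcome at `p`, the grand coalition can therefore report preferences ranking `ν i` first for each
agent `i`, obtain `ν`, and be weakly better off with someone strictly better off, contradicting
group strategy-proofness.
-/

variable {N O : Type}

@[reducible]
noncomputable def topOrder [Fintype O] (c : O) : LinearOrder O :=
  LinearOrder.lift' (fun b => toLex (decide (b = c), Fintype.equivFin O b))
    fun _ _ h => (Fintype.equivFin O).injective (congrArg Prod.snd h)

theorem topObj_eq_of_forall_le [Fintype O] [Nonempty O] (pi : LinearOrder O) {c : O}
    (h : ∀ b, pi.le b c) : topObj pi = c :=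
  pi.le_antisymm _ _ (@Finset.max'_le O pi _ _ c fun b _ => h b)
    (@Finset.le_max' O pi _ c (Finset.mem_univ c))

theorem topObj_topOrder [Fintype O] [Nonempty O] (c : O) : topObj (topOrder c) = c := by
  refine topObj_eq_of_forall_le _ fun b => ?_
  by_cases hb : b = c
  · subst hb
    exact (topOrder b).le_refl b
  · show toLex (decide (b = c), Fintype.equivFin O b) ≤ toLex (decide (c = c), Fintype.equivFin O c)
    simp only [hb, decide_false, decide_true]
    exact (Prod.Lex.toLex_lt_toLex.2 (.inl Bool.false_lt_true)).le

theorem exists_tau1_eq [Fintype O] [Nonempty O] (ν : N → O) : ∃ p : N → LinearOrder O, tau1 p = ν :=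
  ⟨fun i => topOrder (ν i), funext fun i => topObj_topOrder (ν i)⟩

theorem lpRunsTo.eq_tau1 [Fintype O] [Nonempty O] {C : Set (N → O)} {α : (N → O) → Set N}
    {p : N → LinearOrder O} {y : N → O} (hrun : lpRunsTo C α p y) (hp : tau1 p ∈ C) :
    y = tau1 p := by
  obtain ⟨m, x, hx0, hsteps, hxm, -⟩ := hrun
  rcases Nat.eq_zero_or_pos m with rfl | hm
  · rw [← hxm, hx0]
  · exact absurd (hx0 ▸ hp) (hsteps 0 hm).1

theorem lpInduces.unanimity [Fintype O] [Nonempty O] {C : Set (N → O)} {α : (N → O) → Set N}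
    {f : (N → LinearOrder O) → N → O} (h : lpInduces C α f) : Unanimity C f :=
  fun p hp => (h.2 p).eq_tau1 hp

theorem GSP.paretoEff_of_unanimity [Fintype O] [Nonempty O] {C : Set (N → O)}
    {f : (N → LinearOrder O) → N → O} (hgsp : GSP f) (hun : Unanimity C f) : ParetoEff C f := by
  rintro p ⟨ν, hνC, hweak, k, hk⟩
  obtain ⟨p', hp'⟩ := exists_tau1_eq ν
  have hfp' : f p' = ν := (hun p' (hp' ▸ hνC)).trans hp'
  exact hgsp p p' Set.univ ⟨k, trivial⟩ (fun j hj => absurd (Set.mem_univ j) hj)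
    ⟨fun j _ => hfp' ▸ hweak j, k, trivial, hfp' ▸ hk⟩

theorem gsp_localPriority_paretoEfficient_general
    {N O : Type} [Fintype O] [Nonempty O]
    (C : Set (N → O))
    (f : (N → LinearOrder O) → N → O)
    (hlpm : ∃ α, lpInduces C α f) (hgsp : GSP f) :
    ParetoEff C f :=
  let ⟨_, hα⟩ := hlpm
  hgsp.paretoEff_of_unanimity hα.unanimity

/-- Proposition 3, first part: if a local priority mechanism is
group strategy-proof, then it is Pareto efficient. -/
theorem gsp_localPriority_paretoEfficient
    {N O : Type} [Fintype N] [Fintype O] [Nonempty O]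
    (C : Set (N → O)) (hC : C.Nonempty)
    (f : (N → LinearOrder O) → N → O)
    (hlpm : ∃ α, lpInduces C α f) (hgsp : GSP f) :
    ParetoEff C f :=
  gsp_localPriority_paretoEfficient_general C f hlpm hgsp
end
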